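/- arXiv:1410.7918 — 7 statements merged into one kernel-verified Lean document; each statement's English description precedes it below -/
import Mathlib

section
/- For any positive integer T and any α ∈ [0,T], the function g(x) = e^{-x} x^T / T! satisfies g(T+α) ≥ g(T-α). -/
open Real Set

lemma poisson_key_ineq : ∀ t : ℝ, 0 ≤ t →
    (1 - t) * Real.exp t ≤ (1 + t) * Real.exp (-t) := by
  intro t ht
  set f : ℝ → ℝ := fun t => (1 + t) * Real.exp (-t) - (1 - t) * Real.exp t with hf
  have hder : ∀ x : ℝ, HasDerivAt f (x * (Real.exp x - Real.exp (-x))) x := by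
    intro x
    have he : HasDerivAt (fun y : ℝ => Real.exp (-y)) (-Real.exp (-x)) x := by
      simpa [Function.comp_def] using (Real.hasDerivAt_exp (-x)).comp x (hasDerivAt_neg x)
    have h1 : HasDerivAt (fun y : ℝ => (1 + y) * Real.exp (-y))
        (1 * Real.exp (-x) + (1 + x) * (-Real.exp (-x))) x :=
      (((hasDerivAt_id x).const_add 1)).mul he
    have h2 : HasDerivAt (fun y : ℝ => (1 - y) * Real.exp y)
        ((-1) * Real.exp x + (1 - x) * Real.exp x) x := by
      simpa [Pi.mul_def] using ((hasDerivAt_id x).const_sub 1).mul (Real.hasDerivAt_exp x)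
    have := h1.sub h2
    refine this.congr_deriv ?_
    ring
  have hmono : MonotoneOn f (Set.Ici (0 : ℝ)) := by
    apply monotoneOn_of_deriv_nonneg (convex_Ici 0)
    · exact (Continuous.continuousOn (by continuity))
    · intro x hx
      exact (hder x).differentiableAt.differentiableWithinAt
    · intro x hx
      rw [interior_Ici] at hx
      rw [(hder x).deriv]
      have hx0 : (0:ℝ) ≤ x := le_of_lt hx
      have : Real.exp (-x) ≤ Real.exp x := Real.exp_le_exp.mpr (by linarith)
      nlinarith
  have h0 : f 0 = 0 := by simp [hf]
  have := hmono (Set.self_mem_Ici) (Set.mem_Ici.mpr ht) ht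
  rw [h0] at this
  simp only [hf] at this
  linarith

theorem poisson_pmf_term_symmetry (T : ℕ) (hT : 1 ≤ T)
    (g : ℝ → ℝ) (hg : ∀ x, g x = Real.exp (-x) * x ^ T / (Nat.factorial T)) :
    ∀ α : ℝ, α ∈ Set.Icc (0 : ℝ) T → g ((T : ℝ) + α) ≥ g ((T : ℝ) - α) := by
  intro α hα
  obtain ⟨hα0, hαT⟩ := hα
  have hTpos : (0:ℝ) < T := by exact_mod_cast hT
  set t : ℝ := α / T with htdef
  have ht0 : 0 ≤ t := div_nonneg hα0 hTpos.le
  have key := poisson_key_ineq t ht0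
  -- scale by T
  have hscale : ((T:ℝ) - α) * Real.exp t ≤ ((T:ℝ) + α) * Real.exp (-t) := by
    have h1 : (T:ℝ) - α = T * (1 - t) := by rw [htdef]; field_simp
    have h2 : (T:ℝ) + α = T * (1 + t) := by rw [htdef]; field_simp
    rw [h1, h2, mul_assoc, mul_assoc]
    exact mul_le_mul_of_nonneg_left key hTpos.le
  have hL0 : 0 ≤ ((T:ℝ) - α) * Real.exp t :=
    mul_nonneg (by linarith) (Real.exp_pos _).le
  have hpow := pow_le_pow_left₀ hL0 hscale T
  rw [mul_pow, mul_pow, ← Real.exp_nat_mul, ← Real.exp_nat_mul] at hpow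
  have hTt : (T:ℝ) * t = α := by rw [htdef]; field_simp
  have hTt' : (T:ℝ) * (-t) = -α := by rw [htdef]; field_simp
  rw [hTt, hTt'] at hpow
  -- now: (T-α)^T * exp α ≤ (T+α)^T * exp (-α)
  rw [hg, hg]
  have hfact : (0:ℝ) < (Nat.factorial T : ℝ) := by exact_mod_cast Nat.factorial_pos T
  have hmain : Real.exp (-((T:ℝ) - α)) * ((T:ℝ) - α) ^ T ≤
      Real.exp (-((T:ℝ) + α)) * ((T:ℝ) + α) ^ T := by
    rw [show -((T:ℝ) - α) = -T + α by ring, show -((T:ℝ) + α) = -T + -α by ring,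
      Real.exp_add, Real.exp_add, mul_assoc, mul_assoc]
    refine mul_le_mul_of_nonneg_left ?_ (Real.exp_pos _).le
    nlinarith [hpow]
  exact div_le_div_of_nonneg_right hmain hfact.le
end

section
/- For any integer T ≥ 1, the equation log(2θ^{T+1})/(θ-1) = T has a unique solution θ > 1. -/
open Real Set

theorem theta_exists_unique (T : ℕ) (hT : 1 ≤ T) :
    ∃! θ : ℝ, 1 < θ ∧ Real.log (2 * θ ^ (T + 1)) / (θ - 1) = (T : ℝ) := by
  have hT1 : (1:ℝ) ≤ T := by exact_mod_cast hT
  have hT0 : (0:ℝ) < T := by linarith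
  set f : ℝ → ℝ := fun θ => T*(θ-1) - (T+1)*Real.log θ - Real.log 2 with hf
  set c : ℝ := 1 + 1/T with hc
  have hc1 : 1 < c := by
    have : 0 < 1/(T:ℝ) := by positivity
    simp only [hc]; linarith
  have hderiv : ∀ x : ℝ, 0 < x → HasDerivAt f ((T:ℝ) - (T+1)/x) x := by
    intro x hx
    have h1 : HasDerivAt (fun θ : ℝ => (T:ℝ)*(θ-1)) (T:ℝ) x := by
      simpa using (((hasDerivAt_id x).sub_const 1).const_mul (T:ℝ))
    have h2 : HasDerivAt (fun θ : ℝ => ((T:ℝ)+1)*Real.log θ) ((T+1)/x) x := by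
      simpa [div_eq_mul_inv, mul_comm] using (Real.hasDerivAt_log hx.ne').const_mul ((T:ℝ)+1)
    simpa [hf] using (h1.sub h2).sub_const (Real.log 2)
  have hcont : ContinuousOn f (Set.Ici (1:ℝ)) := by
    intro x hx
    exact ((hderiv x (by linarith [mem_Ici.mp hx])).continuousAt).continuousWithinAt
  have hf1 : f 1 = -Real.log 2 := by simp [hf]
  have hanti : StrictAntiOn f (Set.Icc 1 c) := by
    apply strictAntiOn_of_deriv_neg (convex_Icc 1 c) (hcont.mono Icc_subset_Ici_self)
    intro x hx
    rw [interior_Icc] at hx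
    have hx0 : (0:ℝ) < x := by linarith [hx.1]
    rw [(hderiv x hx0).deriv, sub_neg, lt_div_iff₀ hx0]
    have hxc : x < 1 + 1/T := hx.2
    calc (T:ℝ)*x < T*(1+1/(T:ℝ)) := by nlinarith
    _ = T + 1 := by field_simp
  have hmono : StrictMonoOn f (Set.Ici c) := by
    apply strictMonoOn_of_deriv_pos (convex_Ici c)
      (hcont.mono (fun x hx => le_trans hc1.le hx))
    intro x hx
    rw [interior_Ici] at hx
    have hx0 : (0:ℝ) < x := by linarith [mem_Ioi.mp hx]
    rw [(hderiv x hx0).deriv, sub_pos, div_lt_iff₀ hx0]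
    have hxc : 1 + 1/(T:ℝ) < x := hx
    calc (T:ℝ)+1 = T*(1+1/(T:ℝ)) := by field_simp
    _ < T*x := by nlinarith
  have hfc : f c < 0 := by
    have h := hanti (left_mem_Icc.mpr hc1.le) (right_mem_Icc.mpr hc1.le) hc1
    rw [hf1] at h
    have h2 : 0 < Real.log 2 := Real.log_pos one_lt_two
    linarith
  have hc25 : c ≤ 25 := by
    have : 1/(T:ℝ) ≤ 1 := by rw [div_le_one hT0]; exact hT1
    simp only [hc]; linarith
  have hf25 : 0 < f 25 := by
    have hlog25 : Real.log 25 ≤ 8 := by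
      have h25 : Real.log 25 = 2 * Real.log 5 := by
        rw [show (25:ℝ) = 5^2 by norm_num, Real.log_pow]; push_cast; ring
      have h5 : Real.log 5 ≤ 4 := by
        have := Real.log_le_sub_one_of_pos (by norm_num : (0:ℝ) < 5); linarith
      linarith
    have h2 : Real.log 2 ≤ 1 := by
      have := Real.log_le_sub_one_of_pos (by norm_num : (0:ℝ) < 2); linarith
    have hval : f 25 = 24*T - (T+1)*Real.log 25 - Real.log 2 := by
      simp only [hf]; ring_nf
    rw [hval]
    nlinarith [Real.log_nonneg (by norm_num : (1:ℝ) ≤ 25)]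
  have key : ∀ θ : ℝ, 1 < θ → (Real.log (2 * θ ^ (T + 1)) / (θ - 1) = (T:ℝ) ↔ f θ = 0) := by
    intro θ hθ
    have hθ0 : 0 < θ := by linarith
    have hsub : θ - 1 ≠ 0 := by intro h; apply absurd hθ; simp; linarith [sub_eq_zero.mp h]
    rw [div_eq_iff hsub, Real.log_mul two_ne_zero (pow_ne_zero _ hθ0.ne'), Real.log_pow]
    constructor
    · intro h; simp only [hf]; push_cast at h ⊢; linarith
    · intro h; simp only [hf] at h; push_cast at h ⊢; linarith
  obtain ⟨θ₀, hθ₀mem, hθ₀⟩ := intermediate_value_Icc hc25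
    (hcont.mono (fun x hx => le_trans hc1.le hx.1)) ⟨hfc.le, hf25.le⟩
  have hθ₀1 : 1 < θ₀ := lt_of_lt_of_le hc1 hθ₀mem.1
  refine ⟨θ₀, ⟨hθ₀1, (key θ₀ hθ₀1).mpr hθ₀⟩, ?_⟩
  rintro θ ⟨hθ1, heq⟩
  have hfθ : f θ = 0 := (key θ hθ1).mp heq
  have hge : ∀ x : ℝ, 1 < x → f x = 0 → c ≤ x := by
    intro x hx hfx
    by_contra h
    push_neg at h
    have hlt := hanti (left_mem_Icc.mpr hc1.le) ⟨hx.le, h.le⟩ hx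
    rw [hf1, hfx] at hlt
    have h2 : 0 < Real.log 2 := Real.log_pos one_lt_two
    linarith
  exact hmono.injOn (mem_Ici.mpr (hge θ hθ1 hfθ)) (mem_Ici.mpr (hge θ₀ hθ₀1 hθ₀))
    (by rw [hfθ, hθ₀])
end

section
/- Let T ≥ 1 be an integer, r > 1, and suppose a₁, a₂ > 0 satisfy the stationarity equation 2r e^{-a₁ - r a₂}(a₁ + r a₂)^T/T! = e^{-a₂} a₂^T/T! together with a₂ ≤ T and a₁ ≤ T. Then a₁ + (r+1) a₂ > 2T, and consequently a₂ > T/(r+1). -/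
open Real

/-- Key inequality: `(1-v)e^v ≤ (1+v)e^{-v}` for `v ≥ 0`. -/
lemma phi_key (v : ℝ) (hv : 0 ≤ v) :
    (1 - v) * Real.exp v ≤ (1 + v) * Real.exp (-v) := by
  set φ : ℝ → ℝ := fun u => (1 + u) * Real.exp (-u) - (1 - u) * Real.exp u with hφ
  have hd : ∀ w : ℝ, HasDerivAt φ (w * (Real.exp w - Real.exp (-w))) w := by
    intro w
    have he : HasDerivAt (fun u : ℝ => Real.exp (-u)) (Real.exp (-w) * (-1)) w := by
      simpa using ((hasDerivAt_id w).neg).exp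
    have h1 : HasDerivAt (fun u : ℝ => (1 + u) * Real.exp (-u))
        (1 * Real.exp (-w) + (1 + w) * (Real.exp (-w) * (-1))) w :=
      ((hasDerivAt_id w).const_add 1).mul he
    have h2 : HasDerivAt (fun u : ℝ => (1 - u) * Real.exp u)
        ((-1) * Real.exp w + (1 - w) * Real.exp w) w :=
      ((hasDerivAt_id w).const_sub 1).mul (Real.hasDerivAt_exp w)
    have h3 := h1.sub h2
    exact h3.congr_deriv (by ring)
  have hmono : MonotoneOn φ (Set.Ici (0:ℝ)) := by
    apply monotoneOn_of_deriv_nonneg (convex_Ici 0)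
    · exact fun w _ => (hd w).continuousAt.continuousWithinAt
    · exact fun w _ => (hd w).differentiableAt.differentiableWithinAt
    · intro w hw
      rw [(hd w).deriv]
      rw [interior_Ici] at hw
      have hw' : (0:ℝ) < w := hw
      have hee : Real.exp (-w) ≤ Real.exp w := Real.exp_le_exp.mpr (by linarith)
      nlinarith
  have h0 : φ 0 ≤ φ v := hmono Set.self_mem_Ici hv hv
  simp only [hφ] at h0
  norm_num at h0
  linarith

/-- Reflection: for `0 < y ≤ T`, `e^{-y} y^T ≤ e^{-(2T-y)} (2T-y)^T`. -/
lemma reflect (T : ℕ) (y : ℝ) (hy : 0 < y) (hyT : y ≤ (T:ℝ)) :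
    Real.exp (-y) * y ^ T ≤ Real.exp (-(2 * (T:ℝ) - y)) * (2 * (T:ℝ) - y) ^ T := by
  have hT : (0:ℝ) < (T:ℝ) := lt_of_lt_of_le hy hyT
  set v : ℝ := ((T:ℝ) - y) / T with hvdef
  have hv0 : 0 ≤ v := by
    apply div_nonneg (by linarith) hT.le
  have key := phi_key v hv0
  have e2 : Real.exp (-v) * Real.exp v = 1 := by
    rw [← Real.exp_add]; simp
  have e1 : Real.exp v * Real.exp v = Real.exp (2*v) := by
    rw [← Real.exp_add]; ring_nf
  have h1 : (1 - v) * Real.exp (2*v) ≤ 1 + v := by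
    have := mul_le_mul_of_nonneg_right key (Real.exp_pos v).le
    nlinarith [this, e1, e2]
  have hv1 : (T:ℝ) * (1 - v) = y := by
    rw [hvdef]; field_simp; ring
  have hv2 : (T:ℝ) * (1 + v) = 2*(T:ℝ) - y := by
    rw [hvdef]; field_simp; ring
  have hbase : y * Real.exp (2*v) ≤ 2*(T:ℝ) - y := by
    have := mul_le_mul_of_nonneg_left h1 hT.le
    nlinarith [this]
  have hy2T : (0:ℝ) < 2*(T:ℝ) - y := by linarith
  have hpow : (y * Real.exp (2*v)) ^ T ≤ (2*(T:ℝ) - y) ^ T :=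
    pow_le_pow_left₀ (by positivity) hbase T
  have hTv : (T:ℝ) * (2 * v) = 2 * ((T:ℝ) - y) := by
    rw [hvdef]; field_simp
  have hexpT : Real.exp (2*v) ^ T = Real.exp (2 * ((T:ℝ) - y)) := by
    rw [← Real.exp_nat_mul, hTv]
  have hpow' : y ^ T * Real.exp (2 * ((T:ℝ) - y)) ≤ (2*(T:ℝ) - y) ^ T := by
    rw [mul_pow, hexpT] at hpow
    exact hpow
  have hsplit : Real.exp (-y) = Real.exp (-(2*(T:ℝ) - y)) * Real.exp (2 * ((T:ℝ) - y)) := by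
    rw [← Real.exp_add]; congr 1; ring
  calc Real.exp (-y) * y ^ T
      = Real.exp (-(2*(T:ℝ) - y)) * (y ^ T * Real.exp (2 * ((T:ℝ) - y))) := by
        rw [hsplit]; ring
    _ ≤ Real.exp (-(2*(T:ℝ) - y)) * (2*(T:ℝ) - y) ^ T :=
        mul_le_mul_of_nonneg_left hpow' (Real.exp_pos _).le

/-- Strict monotonicity of `t ↦ e^{-t} t^T` on `(0, T]`. -/
lemma fmono (T : ℕ) (s t : ℝ) (hs : 0 < s) (hst : s < t) (htT : t ≤ (T:ℝ)) :
    Real.exp (-s) * s ^ T < Real.exp (-t) * t ^ T := by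
  have ht : 0 < t := hs.trans hst
  have hT : (0:ℝ) < (T:ℝ) := ht.trans_le htT
  have hTne : T ≠ 0 := by exact_mod_cast hT.ne'
  set d : ℝ := t - s with hddef
  have hd : 0 < d := by simp [hddef]; linarith
  -- exp(d/t) < t/s
  have hne : -(d/t) ≠ 0 := by
    have : 0 < d / t := div_pos hd ht
    intro h; rw [neg_eq_zero] at h; linarith
  have hAdd := Real.add_one_lt_exp hne
  have hstq : 1 - d/t = s/t := by field_simp [hddef]; rw [hddef]; ring
  have hst' : s/t < Real.exp (-(d/t)) := by
    rw [← hstq]; linarith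
  rw [Real.exp_neg] at hst'
  set E : ℝ := Real.exp (d/t) with hEdef
  have hE : 0 < E := Real.exp_pos _
  have hEs : E * (s/t) < 1 := by
    have := mul_lt_mul_of_pos_left hst' hE
    rwa [mul_inv_cancel₀ hE.ne'] at this
  have h2 : E < t / s := by
    rw [lt_div_iff₀ hs]
    have h3 : E * (s/t) * t = E * s := by field_simp
    nlinarith [mul_lt_mul_of_pos_right hEs ht]
  -- exp(d/T) ≤ exp(d/t)
  have h1 : Real.exp (d/(T:ℝ)) ≤ E := by
    rw [hEdef]
    apply Real.exp_le_exp.mpr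
    gcongr
  have h4 : Real.exp (d/(T:ℝ)) < t/s := lt_of_le_of_lt h1 h2
  have h5 : Real.exp (d/(T:ℝ)) ^ T < (t/s) ^ T :=
    pow_lt_pow_left₀ h4 (Real.exp_pos _).le hTne
  have h6 : Real.exp (d/(T:ℝ)) ^ T = Real.exp d := by
    rw [← Real.exp_nat_mul]
    congr 1
    field_simp
  rw [h6, div_pow] at h5
  have h7 : Real.exp d * s ^ T < t ^ T := by
    rw [lt_div_iff₀ (pow_pos hs T)] at h5
    linarith
  have h8 := mul_lt_mul_of_pos_left h7 (Real.exp_pos (-t))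
  calc Real.exp (-s) * s ^ T = Real.exp (-t) * (Real.exp d * s ^ T) := by
        rw [← mul_assoc, ← Real.exp_add]
        congr 2
        rw [hddef]; ring
    _ < Real.exp (-t) * t ^ T := h8

/-- Strict antitonicity of `t ↦ e^{-t} t^T` on `[T, ∞)`. -/
lemma fanti (T : ℕ) (hT : 1 ≤ T) (s t : ℝ) (hTs : (T:ℝ) ≤ s) (hst : s < t) :
    Real.exp (-t) * t ^ T < Real.exp (-s) * s ^ T := by
  have hT0 : (0:ℝ) < (T:ℝ) := by exact_mod_cast Nat.pos_of_ne_zero (by omega)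
  have hs : 0 < s := hT0.trans_le hTs
  have ht : 0 < t := hs.trans hst
  have hTne : T ≠ 0 := by omega
  set d : ℝ := t - s with hddef
  have hd : 0 < d := by simp [hddef]; linarith
  have hds : (t - s)/s ≤ (t - s)/(T:ℝ) := by
    gcongr
  have htss : t/s = 1 + (t-s)/s := by field_simp; ring
  have hne : d/(T:ℝ) ≠ 0 := by positivity
  have hAdd := Real.add_one_lt_exp hne
  have h1 : t/s < Real.exp (d/(T:ℝ)) := by
    rw [htss]
    calc 1 + (t-s)/s ≤ 1 + (t-s)/(T:ℝ) := by linarith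
      _ < Real.exp (d/(T:ℝ)) := by rw [hddef]; linarith
  have h5 : (t/s) ^ T < Real.exp (d/(T:ℝ)) ^ T :=
    pow_lt_pow_left₀ h1 (by positivity) hTne
  have h6 : Real.exp (d/(T:ℝ)) ^ T = Real.exp d := by
    rw [← Real.exp_nat_mul]
    congr 1
    field_simp
  rw [h6, div_pow] at h5
  have h7 : t ^ T < Real.exp d * s ^ T := by
    rw [div_lt_iff₀ (pow_pos hs T)] at h5
    linarith
  have h8 := mul_lt_mul_of_pos_left h7 (Real.exp_pos (-t))
  calc Real.exp (-t) * t ^ T < Real.exp (-t) * (Real.exp d * s ^ T) := h8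
    _ = Real.exp (-s) * s ^ T := by
        rw [← mul_assoc, ← Real.exp_add]
        congr 2
        rw [hddef]; ring

theorem stationarity_a2_bound (T : ℕ) (hT : 1 ≤ T) (r a₁ a₂ : ℝ) (hr : 1 < r)
    (ha₁ : 0 < a₁) (ha₂ : 0 < a₂)
    (hstat : 2 * r * Real.exp (-(a₁ + r * a₂)) * (a₁ + r * a₂) ^ T / (Nat.factorial T) =
        Real.exp (-a₂) * a₂ ^ T / (Nat.factorial T))
    (ha₂T : a₂ ≤ (T : ℝ)) (ha₁T : a₁ ≤ (T : ℝ)) :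
    a₁ + (r + 1) * a₂ > 2 * (T : ℝ) ∧ a₂ > (T : ℝ) / (r + 1) := by
  have hfT : (0:ℝ) < (Nat.factorial T : ℝ) := by
    exact_mod_cast T.factorial_pos
  have hstat' : 2 * r * Real.exp (-(a₁ + r * a₂)) * (a₁ + r * a₂) ^ T =
      Real.exp (-a₂) * a₂ ^ T := by
    have h := (div_eq_div_iff hfT.ne' hfT.ne').mp hstat
    exact mul_right_cancel₀ hfT.ne' h
  set x : ℝ := a₁ + r * a₂ with hx
  have hx0 : 0 < x := by nlinarith
  have hfx : 0 < Real.exp (-x) * x ^ T := by positivity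
  have hxy : a₂ < x := by nlinarith
  have hlt : Real.exp (-x) * x ^ T < Real.exp (-a₂) * a₂ ^ T := by
    rw [← hstat']
    nlinarith [hfx]
  have hmain : x + a₂ > 2 * (T:ℝ) := by
    by_contra h
    push_neg at h
    rcases le_or_gt x (T:ℝ) with hc | hc
    · have := fmono T a₂ x ha₂ hxy hc
      linarith
    · have h1 := reflect T a₂ ha₂ ha₂T
      have h2 : Real.exp (-(2*(T:ℝ) - a₂)) * (2*(T:ℝ) - a₂) ^ T ≤
          Real.exp (-x) * x ^ T := by
        rcases eq_or_lt_of_le (show x ≤ 2*(T:ℝ) - a₂ by linarith) with he | hlt2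
        · rw [he]
        · exact (fanti T hT x (2*(T:ℝ) - a₂) hc.le hlt2).le
      linarith
  refine ⟨by linarith, ?_⟩
  rw [gt_iff_lt, div_lt_iff₀ (by linarith : (0:ℝ) < r + 1)]
  nlinarith
end

section
/- Define P(a₁,a₂) = (1/4) e^{-r a₁} Σ_{y=0}^{T} (r a₁)^y/y! + (1/8) e^{-a₁ - r a₂} Σ_{y=0}^{T} (a₁ + r a₂)^y/y! + (1/8) e^{-a₁} Σ_{y=T+1}^{∞} a₁^y/y! + (1/16) e^{-a₂} Σ_{y=T+1}^{∞} a₂^y/y!, where r > 1 and T ≥ 1. Then at a₂ = 0 with a₁ > 0, the partial derivative ∂P/∂a₂ equals -(1/8) r e^{-a₁} a₁^T/T! < 0, and at a₁ = 0 with a₂ > 0, ∂P/∂a₁ equals -(1/8) e^{-r a₂} (r a₂)^T/T! < 0. Hence P has no local minimum on the boundary a₁ = 0 or a₂ = 0. -/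
open Real

/-- The reduced error probability `P(a₁,a₂)` for the one-symbol-memory molecular channel:
threshold `T`, rate ratio `r = π₀/π₁`. The tail sums `Σ_{y>T}` are written as
`∑' y, a ^ (y + T + 1) / (y + T + 1)!`. -/
noncomputable def reducedErrorProb (T : ℕ) (r a₁ a₂ : ℝ) : ℝ :=
    (1 / 4) * Real.exp (-(r * a₁)) *
        ∑ y ∈ Finset.range (T + 1), (r * a₁) ^ y / (Nat.factorial y)
  + (1 / 8) * Real.exp (-(a₁ + r * a₂)) *
        ∑ y ∈ Finset.range (T + 1), (a₁ + r * a₂) ^ y / (Nat.factorial y)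
  + (1 / 8) * Real.exp (-a₁) * ∑' y : ℕ, a₁ ^ (y + T + 1) / (Nat.factorial (y + T + 1))
  + (1 / 16) * Real.exp (-a₂) * ∑' y : ℕ, a₂ ^ (y + T + 1) / (Nat.factorial (y + T + 1))

/-- The truncated Poisson CDF `F(x) = e^{-x} Σ_{y=0}^T x^y/y!`. -/
noncomputable def Fa (T : ℕ) (x : ℝ) : ℝ :=
  Real.exp (-x) * ∑ y ∈ Finset.range (T + 1), x ^ y / (Nat.factorial y)

lemma exp_tsum_tail (T : ℕ) (a : ℝ) :
    ∑' y : ℕ, a ^ (y + T + 1) / (Nat.factorial (y + T + 1)) =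
      Real.exp a - ∑ y ∈ Finset.range (T + 1), a ^ y / (Nat.factorial y) := by
  have hs := Real.summable_pow_div_factorial a
  have h := Summable.sum_add_tsum_nat_add (T + 1) hs
  have he : Real.exp a = ∑' n : ℕ, a ^ n / (Nat.factorial n) := by
    rw [Real.exp_eq_exp_ℝ, NormedSpace.exp_eq_tsum_div]
  have h2 : ∑' y : ℕ, a ^ (y + T + 1) / (Nat.factorial (y + T + 1)) =
      ∑' y : ℕ, a ^ (y + (T + 1)) / (Nat.factorial (y + (T + 1))) := by
    congr 1
  rw [h2, he]
  linarith [h]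

lemma hasDerivAt_partialSum (T : ℕ) (a : ℝ) :
    HasDerivAt (fun x : ℝ => ∑ y ∈ Finset.range (T + 1), x ^ y / (Nat.factorial y))
      (∑ y ∈ Finset.range T, a ^ y / (Nat.factorial y)) a := by
  have h : HasDerivAt (fun x : ℝ => ∑ y ∈ Finset.range (T + 1), x ^ y / (Nat.factorial y))
      (∑ y ∈ Finset.range (T + 1), (y : ℝ) * a ^ (y - 1) / (Nat.factorial y)) a := by
    apply HasDerivAt.fun_sum
    intro i _
    exact (hasDerivAt_pow i a).div_const _
  convert h using 1
  rw [Finset.sum_range_succ']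
  have : ∀ i ∈ Finset.range T, ((i + 1 : ℕ) : ℝ) * a ^ (i + 1 - 1) / (Nat.factorial (i + 1))
      = a ^ i / (Nat.factorial i) := by
    intro i _
    rw [Nat.factorial_succ]
    have h1 : ((i : ℝ) + 1) ≠ 0 := by positivity
    have h2 : ((Nat.factorial i : ℝ)) ≠ 0 := by
      exact_mod_cast (Nat.factorial_pos i).ne'
    push_cast
    field_simp
  rw [Finset.sum_congr rfl this]
  simp

lemma hasDerivAt_Fa (T : ℕ) (a : ℝ) :
    HasDerivAt (Fa T) (-(Real.exp (-a) * a ^ T / (Nat.factorial T))) a := by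
  have h1 : HasDerivAt (fun x : ℝ => Real.exp (-x)) (-Real.exp (-a)) a := by
    simpa using (hasDerivAt_neg a).exp
  have h := h1.mul (hasDerivAt_partialSum T a)
  convert h using 1
  · rfl
  · rfl
  · rfl
  rw [Finset.sum_range_succ]
  ring

lemma P_eq (T : ℕ) (r a₁ a₂ : ℝ) :
    reducedErrorProb T r a₁ a₂ =
      (1 / 4) * Fa T (r * a₁) + (1 / 8) * Fa T (a₁ + r * a₂)
        + (1 / 8) * (1 - Fa T a₁) + (1 / 16) * (1 - Fa T a₂) := by
  have key : ∀ a : ℝ, Real.exp (-a) *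
      (∑' y : ℕ, a ^ (y + T + 1) / (Nat.factorial (y + T + 1))) = 1 - Fa T a := by
    intro a
    rw [exp_tsum_tail, mul_sub, ← Real.exp_add, neg_add_cancel, Real.exp_zero, Fa]
  unfold reducedErrorProb
  rw [mul_assoc ((1:ℝ)/8) (Real.exp (-a₁)), mul_assoc ((1:ℝ)/16) (Real.exp (-a₂)),
    key a₁, key a₂]
  unfold Fa
  ring

lemma one_mem_cone : (1 : ℝ) ∈ posTangentConeAt (Set.Ici (0 : ℝ)) 0 := by
  apply mem_posTangentConeAt_of_segment_subset
  rw [zero_add, segment_eq_Icc zero_le_one]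
  exact Set.Icc_subset_Ici_self

lemma deriv_nonneg_of_localMinOn {g : ℝ → ℝ} {d : ℝ}
    (hmin : IsLocalMinOn g (Set.Ici (0 : ℝ)) 0) (hd : HasDerivAt g d 0) : 0 ≤ d := by
  have := hmin.hasFDerivWithinAt_nonneg hd.hasFDerivAt.hasFDerivWithinAt one_mem_cone
  simpa using this

lemma not_localMin_snd {f : ℝ × ℝ → ℝ} {a₁ d : ℝ} (ha₁ : 0 ≤ a₁)
    (hd : HasDerivAt (fun b => f (a₁, b)) d 0) (hneg : d < 0) :
    ¬ IsLocalMinOn f (Set.Ici (0 : ℝ) ×ˢ Set.Ici (0 : ℝ)) (a₁, 0) := by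
  intro h
  have ht : Filter.Tendsto (fun b : ℝ => (a₁, b)) (nhdsWithin 0 (Set.Ici (0 : ℝ)))
      (nhdsWithin (a₁, 0) (Set.Ici (0 : ℝ) ×ˢ Set.Ici (0 : ℝ))) := by
    apply ContinuousWithinAt.tendsto_nhdsWithin
    · exact (continuous_const.prodMk continuous_id).continuousWithinAt
    · intro b hb
      exact Set.mk_mem_prod ha₁ hb
  have hmin : IsLocalMinOn (fun b => f (a₁, b)) (Set.Ici (0 : ℝ)) 0 :=
    IsMinFilter.comp_tendsto h ht
  linarith [deriv_nonneg_of_localMinOn hmin hd]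

lemma not_localMin_fst {f : ℝ × ℝ → ℝ} {a₂ d : ℝ} (ha₂ : 0 ≤ a₂)
    (hd : HasDerivAt (fun a => f (a, a₂)) d 0) (hneg : d < 0) :
    ¬ IsLocalMinOn f (Set.Ici (0 : ℝ) ×ˢ Set.Ici (0 : ℝ)) (0, a₂) := by
  intro h
  have ht : Filter.Tendsto (fun a : ℝ => (a, a₂)) (nhdsWithin 0 (Set.Ici (0 : ℝ)))
      (nhdsWithin (0, a₂) (Set.Ici (0 : ℝ) ×ˢ Set.Ici (0 : ℝ))) := by
    apply ContinuousWithinAt.tendsto_nhdsWithin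
    · exact (continuous_id.prodMk continuous_const).continuousWithinAt
    · intro a ha
      exact Set.mk_mem_prod ha ha₂
  have hmin : IsLocalMinOn (fun a => f (a, a₂)) (Set.Ici (0 : ℝ)) 0 :=
    IsMinFilter.comp_tendsto h ht
  linarith [deriv_nonneg_of_localMinOn hmin hd]

theorem no_boundary_local_min (T : ℕ) (hT : 1 ≤ T) (r : ℝ) (hr : 1 < r) :
    (∀ a₁ : ℝ, 0 < a₁ →
      HasDerivAt (fun b => reducedErrorProb T r a₁ b)
        (-(1 / 8) * r * Real.exp (-a₁) * a₁ ^ T / (Nat.factorial T)) 0 ∧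
      -(1 / 8) * r * Real.exp (-a₁) * a₁ ^ T / (Nat.factorial T) < 0 ∧
      ¬ IsLocalMinOn (fun p : ℝ × ℝ => reducedErrorProb T r p.1 p.2)
        (Set.Ici (0 : ℝ) ×ˢ Set.Ici (0 : ℝ)) (a₁, 0)) ∧
    (∀ a₂ : ℝ, 0 < a₂ →
      HasDerivAt (fun a => reducedErrorProb T r a a₂)
        (-(1 / 8) * Real.exp (-(r * a₂)) * (r * a₂) ^ T / (Nat.factorial T)) 0 ∧
      -(1 / 8) * Real.exp (-(r * a₂)) * (r * a₂) ^ T / (Nat.factorial T) < 0 ∧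
      ¬ IsLocalMinOn (fun p : ℝ × ℝ => reducedErrorProb T r p.1 p.2)
        (Set.Ici (0 : ℝ) ×ˢ Set.Ici (0 : ℝ)) (0, a₂)) := by
  have hr0 : (0 : ℝ) < r := lt_trans zero_lt_one hr
  have hfact : (0 : ℝ) < (Nat.factorial T : ℝ) := by
    exact_mod_cast Nat.factorial_pos T
  have hT0 : T ≠ 0 := by omega
  constructor
  · intro a₁ ha₁
    have hderiv : HasDerivAt (fun b => reducedErrorProb T r a₁ b)
        (-(1 / 8) * r * Real.exp (-a₁) * a₁ ^ T / (Nat.factorial T)) 0 := by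
      have hinner : HasDerivAt (fun b : ℝ => a₁ + r * b) r 0 := by
        simpa using ((hasDerivAt_id (0 : ℝ)).const_mul r).const_add a₁
      have houter : HasDerivAt (Fa T) (-(Real.exp (-a₁) * a₁ ^ T / (Nat.factorial T)))
          ((fun b : ℝ => a₁ + r * b) 0) := by
        simpa using hasDerivAt_Fa T a₁
      have h2 : HasDerivAt (fun b : ℝ => Fa T (a₁ + r * b))
          ((-(Real.exp (-a₁) * a₁ ^ T / (Nat.factorial T))) * r) 0 :=
        by exact houter.comp 0 hinner
      have heq : (fun b => reducedErrorProb T r a₁ b) = fun b =>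
          ((1 / 4) * Fa T (r * a₁) + (1 / 8) * (1 - Fa T a₁))
            + (1 / 8) * Fa T (a₁ + r * b) + (1 / 16) * (1 - Fa T b) := by
        funext b
        rw [P_eq]
        ring
      rw [heq]
      have h3 : HasDerivAt (fun b : ℝ => (1 / 16) * (1 - Fa T b))
          ((1 / 16) * (-(-(Real.exp (-(0:ℝ)) * (0:ℝ) ^ T / (Nat.factorial T))))) 0 :=
        ((hasDerivAt_Fa T 0).const_sub 1).const_mul (1 / 16)
      have h4 := ((hasDerivAt_const (0 : ℝ)
          ((1 / 4) * Fa T (r * a₁) + (1 / 8) * (1 - Fa T a₁))).add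
          (h2.const_mul (1 / 8))).add h3
      convert h4 using 1
      · rfl
      · rfl
      · rfl
      rw [zero_pow hT0]
      ring
    refine ⟨hderiv, ?_, ?_⟩
    · have hpos : (0 : ℝ) < (1 / 8) * r * Real.exp (-a₁) * a₁ ^ T :=
        mul_pos (mul_pos (mul_pos (by norm_num) hr0) (Real.exp_pos _)) (pow_pos ha₁ T)
      have := div_pos hpos hfact
      have heq : -(1 / 8) * r * Real.exp (-a₁) * a₁ ^ T / (Nat.factorial T)
          = -((1 / 8) * r * Real.exp (-a₁) * a₁ ^ T / (Nat.factorial T)) := by ring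
      rw [heq]
      linarith
    · exact not_localMin_snd ha₁.le hderiv (by
        have hpos : (0 : ℝ) < (1 / 8) * r * Real.exp (-a₁) * a₁ ^ T :=
          mul_pos (mul_pos (mul_pos (by norm_num) hr0) (Real.exp_pos _)) (pow_pos ha₁ T)
        have := div_pos hpos hfact
        have heq : -(1 / 8) * r * Real.exp (-a₁) * a₁ ^ T / (Nat.factorial T)
            = -((1 / 8) * r * Real.exp (-a₁) * a₁ ^ T / (Nat.factorial T)) := by ring
        rw [heq]; linarith)
  · intro a₂ ha₂
    have hderiv : HasDerivAt (fun a => reducedErrorProb T r a a₂)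
        (-(1 / 8) * Real.exp (-(r * a₂)) * (r * a₂) ^ T / (Nat.factorial T)) 0 := by
      have hinner : HasDerivAt (fun a : ℝ => a + r * a₂) 1 0 := by
        simpa using (hasDerivAt_id (0 : ℝ)).add_const (r * a₂)
      have houter : HasDerivAt (Fa T)
          (-(Real.exp (-(r * a₂)) * (r * a₂) ^ T / (Nat.factorial T)))
          ((fun a : ℝ => a + r * a₂) 0) := by
        simpa using hasDerivAt_Fa T (r * a₂)
      have h2 : HasDerivAt (fun a : ℝ => Fa T (a + r * a₂))
          ((-(Real.exp (-(r * a₂)) * (r * a₂) ^ T / (Nat.factorial T))) * 1) 0 :=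
        by exact houter.comp 0 hinner
      have hinner2 : HasDerivAt (fun a : ℝ => r * a) r 0 := by
        simpa using (hasDerivAt_id (0 : ℝ)).const_mul r
      have houter2 : HasDerivAt (Fa T)
          (-(Real.exp (-(0:ℝ)) * (0:ℝ) ^ T / (Nat.factorial T)))
          ((fun a : ℝ => r * a) 0) := by
        simpa using hasDerivAt_Fa T 0
      have h1 : HasDerivAt (fun a : ℝ => Fa T (r * a))
          ((-(Real.exp (-(0:ℝ)) * (0:ℝ) ^ T / (Nat.factorial T))) * r) 0 :=
        houter2.comp 0 hinner2
      have heq : (fun a => reducedErrorProb T r a a₂) = fun a =>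
          ((1 / 16) * (1 - Fa T a₂))
            + (1 / 4) * Fa T (r * a) + (1 / 8) * Fa T (a + r * a₂)
            + (1 / 8) * (1 - Fa T a) := by
        funext a
        rw [P_eq]
        ring
      rw [heq]
      have h3 : HasDerivAt (fun a : ℝ => (1 / 8) * (1 - Fa T a))
          ((1 / 8) * (-(-(Real.exp (-(0:ℝ)) * (0:ℝ) ^ T / (Nat.factorial T))))) 0 :=
        ((hasDerivAt_Fa T 0).const_sub 1).const_mul (1 / 8)
      have h4 := (((hasDerivAt_const (0 : ℝ) ((1 / 16) * (1 - Fa T a₂))).add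
          (h1.const_mul (1 / 4))).add (h2.const_mul (1 / 8))).add h3
      convert h4 using 1
      · rfl
      · rfl
      · rfl
      rw [zero_pow hT0]
      ring
    have hlt : -(1 / 8) * Real.exp (-(r * a₂)) * (r * a₂) ^ T / (Nat.factorial T) < 0 := by
      have hpos : (0 : ℝ) < (1 / 8) * Real.exp (-(r * a₂)) * (r * a₂) ^ T :=
        mul_pos (mul_pos (by norm_num) (Real.exp_pos _)) (pow_pos (mul_pos hr0 ha₂) T)
      have := div_pos hpos hfact
      have heq : -(1 / 8) * Real.exp (-(r * a₂)) * (r * a₂) ^ T / (Nat.factorial T)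
          = -((1 / 8) * Real.exp (-(r * a₂)) * (r * a₂) ^ T / (Nat.factorial T)) := by ring
      rw [heq]
      linarith
    exact ⟨hderiv, hlt, not_localMin_fst ha₂.le hderiv hlt⟩
end

section
/- Let T ≥ 1 be an integer and r > 1. The function L(x) = e^{-x} (x^T/T!)(x/(8(T+1)) + 1/(8r)) is strictly increasing on [0, T]. -/
open Real Set

theorem lower_bound_summand_strict_mono (T : ℕ) (hT : 1 ≤ T) (r : ℝ) (hr : 1 < r) :
    StrictMonoOn
      (fun x : ℝ => Real.exp (-x) * (x ^ T / (Nat.factorial T)) *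
        (x / (8 * (T + 1)) + 1 / (8 * r)))
      (Set.Icc (0 : ℝ) T) := by
  have hr0 : (0:ℝ) < r := lt_trans one_pos hr
  have hF : (0:ℝ) < (Nat.factorial T : ℝ) := by
    exact_mod_cast Nat.factorial_pos T
  apply strictMonoOn_of_deriv_pos (convex_Icc 0 (T:ℝ))
  · fun_prop
  · intro x hx
    rw [interior_Icc] at hx
    obtain ⟨hx0, hxT⟩ := hx
    have hD : HasDerivAt (fun x : ℝ => Real.exp (-x) * (x ^ T / (Nat.factorial T)) *
        (x / (8 * ((T:ℝ) + 1)) + 1 / (8 * r)))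
        ((-Real.exp (-x) * (x ^ T / (Nat.factorial T)) +
          Real.exp (-x) * (((T:ℝ) * x ^ (T-1)) / (Nat.factorial T))) *
          (x / (8 * ((T:ℝ) + 1)) + 1 / (8 * r)) +
          Real.exp (-x) * (x ^ T / (Nat.factorial T)) * (1 / (8 * ((T:ℝ) + 1)))) x := by
      have h1 : HasDerivAt (fun x : ℝ => Real.exp (-x)) (-Real.exp (-x)) x := by
        simpa [Function.comp_def] using (Real.hasDerivAt_exp (-x)).comp x ((hasDerivAt_id x).neg)
      have h2 : HasDerivAt (fun x : ℝ => x ^ T / (Nat.factorial T))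
          (((T:ℝ) * x ^ (T-1)) / (Nat.factorial T)) x :=
        (hasDerivAt_pow T x).div_const _
      have h3 : HasDerivAt (fun x : ℝ => x / (8 * ((T:ℝ) + 1)) + 1 / (8 * r))
          (1 / (8 * ((T:ℝ) + 1))) x := by
        simpa using ((hasDerivAt_id x).div_const (8 * ((T:ℝ) + 1))).add_const (1/(8*r))
      exact (h1.mul h2).mul h3
    rw [hD.deriv]
    have hpow : x ^ T = x ^ (T-1) * x := by
      rw [← pow_succ]
      congr 1
      omega
    have key : (-Real.exp (-x) * (x ^ T / (Nat.factorial T)) +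
          Real.exp (-x) * (((T:ℝ) * x ^ (T-1)) / (Nat.factorial T))) *
          (x / (8 * ((T:ℝ) + 1)) + 1 / (8 * r)) +
          Real.exp (-x) * (x ^ T / (Nat.factorial T)) * (1 / (8 * ((T:ℝ) + 1)))
        = Real.exp (-x) * (x ^ (T-1) / (Nat.factorial T)) *
          (((T:ℝ) - x) * (x / (8 * ((T:ℝ) + 1)) + 1 / (8 * r)) + x / (8 * ((T:ℝ) + 1))) := by
      rw [hpow]; ring
    rw [key]
    have hTx : (0:ℝ) < (T:ℝ) - x := by linarith
    have hTp : (0:ℝ) < (T:ℝ) + 1 := by positivity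
    apply mul_pos (mul_pos (Real.exp_pos _) (by positivity))
    have h4 : (0:ℝ) < x / (8 * ((T:ℝ) + 1)) + 1 / (8 * r) := by positivity
    have h5 : (0:ℝ) < x / (8 * ((T:ℝ) + 1)) := by positivity
    exact add_pos (mul_pos hTx h4) h5
end

section
/- Consider minimizing F(b₁,...,b_r) = Σ_j p_j e^{-a_j - b_j} Σ_{0≤y<T} (a_j+b_j)^y/y! over b_j ≥ 0 subject to Σ_j p_j b_j = K', where p_j > 0, Σ p_j = 1, a_j ≥ 0 and T ≥ 1 an integer. At any KKT point with b_j > 0, one has e^{-(a_j+b_j)} (a_j+b_j)^T / T! = λ for a common multiplier λ ≥ 0; since x ↦ e^{-x} x^T/T! is increasing on [0,T] and decreasing on [T,∞), the value a_j + b_j takes at most two distinct values C₁ < T < C₂ across all j with b_j > 0. -/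
open Real

lemma myHasDerivAt (T : ℕ) (hT : 1 ≤ T) (x : ℝ) :
    HasDerivAt (fun x : ℝ => Real.exp (-x) * x ^ T)
      (Real.exp (-x) * x ^ (T - 1) * ((T : ℝ) - x)) x := by
  have h1 : HasDerivAt (fun x : ℝ => Real.exp (-x)) (-Real.exp (-x)) x := by
    exact ((Real.hasDerivAt_exp (-x)).comp x (hasDerivAt_neg x)).congr_deriv (by ring)
  have h2 : HasDerivAt (fun x : ℝ => x ^ T) ((T : ℝ) * x ^ (T - 1)) x := by
    simpa using hasDerivAt_pow T x
  have h := h1.mul h2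
  refine h.congr_deriv ?_
  have hx : x ^ T = x ^ (T - 1) * x := by
    conv_lhs => rw [show T = (T - 1) + 1 by omega]
    rw [pow_succ]
  rw [hx]; ring

lemma myMono (T : ℕ) (hT : 1 ≤ T) :
    StrictMonoOn (fun x : ℝ => Real.exp (-x) * x ^ T) (Set.Icc 0 (T : ℝ)) := by
  apply strictMonoOn_of_deriv_pos (convex_Icc _ _)
  · exact (Real.continuous_exp.comp continuous_neg).mul (continuous_pow T) |>.continuousOn
  · intro x hx
    rw [interior_Icc] at hx
    rw [(myHasDerivAt T hT x).deriv]
    have hx0 : 0 < x := hx.1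
    have hxT : x < (T : ℝ) := hx.2
    have h1 : 0 < Real.exp (-x) * x ^ (T - 1) := by positivity
    nlinarith

lemma myAnti (T : ℕ) (hT : 1 ≤ T) :
    StrictAntiOn (fun x : ℝ => Real.exp (-x) * x ^ T) (Set.Ici (T : ℝ)) := by
  apply strictAntiOn_of_deriv_neg (convex_Ici _)
  · exact (Real.continuous_exp.comp continuous_neg).mul (continuous_pow T) |>.continuousOn
  · intro x hx
    rw [interior_Ici] at hx
    rw [(myHasDerivAt T hT x).deriv]
    have hx' : (T : ℝ) < x := hx
    have hx0 : 0 < x := lt_of_le_of_lt (by positivity) hx'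
    have : (T : ℝ) - x < 0 := by linarith
    have h1 : 0 < Real.exp (-x) * x ^ (T - 1) := by positivity
    nlinarith

/-- At a KKT point of the fixed-interference-distribution optimization, the stationarity
conditions force a common multiplier value on active coordinates, and `a_j + b_j` takes at
most two distinct values `C₁ ≤ T ≤ C₂` over indices with `b_j > 0`. -/
theorem kkt_two_levels (n T : ℕ) (hT : 1 ≤ T)
    (p a b μ : Fin n → ℝ) (lam K' : ℝ) (hlam : 0 ≤ lam)
    (hp : ∀ j, 0 < p j) (hpsum : ∑ j, p j = 1)
    (ha : ∀ j, 0 ≤ a j) (hb : ∀ j, 0 ≤ b j)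
    (hK : ∑ j, p j * b j = K')
    (hμ : ∀ j, 0 ≤ μ j) (hcomp : ∀ j, μ j * b j = 0)
    (hKKT : ∀ j, p j * (Real.exp (-(a j + b j)) * (a j + b j) ^ T / (Nat.factorial T))
        = lam * p j - μ j) :
    (∀ j, 0 < b j →
        Real.exp (-(a j + b j)) * (a j + b j) ^ T / (Nat.factorial T) = lam) ∧
    ∃ C₁ C₂ : ℝ, C₁ ≤ (T : ℝ) ∧ (T : ℝ) ≤ C₂ ∧
      ∀ j, 0 < b j → a j + b j = C₁ ∨ a j + b j = C₂ := by
  have key : ∀ j, 0 < b j →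
      Real.exp (-(a j + b j)) * (a j + b j) ^ T / (Nat.factorial T) = lam := by
    intro j hbj
    have hμ0 : μ j = 0 := by
      rcases mul_eq_zero.mp (hcomp j) with h | h
      · exact h
      · exact absurd h (ne_of_gt hbj)
    have := hKKT j
    rw [hμ0, sub_zero, mul_comm lam] at this
    exact mul_left_cancel₀ (ne_of_gt (hp j)) this
  refine ⟨key, ?_⟩
  set g : ℝ → ℝ := fun x => Real.exp (-x) * x ^ T with hg
  have hfac : (0 : ℝ) < Nat.factorial T := by positivity
  have keyg : ∀ j, 0 < b j → g (a j + b j) = lam * Nat.factorial T := by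
    intro j hbj
    have := key j hbj
    field_simp at this
    rw [mul_comm lam]
    simpa [hg] using this
  have injLow : ∀ x ∈ Set.Icc (0:ℝ) T, ∀ y ∈ Set.Icc (0:ℝ) T, g x = g y → x = y :=
    fun x hx y hy h => (myMono T hT).injOn hx hy h
  have injHigh : ∀ x ∈ Set.Ici (T:ℝ), ∀ y ∈ Set.Ici (T:ℝ), g x = g y → x = y :=
    fun x hx y hy h => (myAnti T hT).injOn hx hy h
  have hmem : ∀ j, 0 ≤ a j + b j := fun j => add_nonneg (ha j) (hb j)
  by_cases h1 : ∃ j, 0 < b j ∧ a j + b j ≤ T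
  · obtain ⟨j₁, hbj₁, hle₁⟩ := h1
    by_cases h2 : ∃ j, 0 < b j ∧ (T : ℝ) ≤ a j + b j
    · obtain ⟨j₂, hbj₂, hle₂⟩ := h2
      refine ⟨a j₁ + b j₁, a j₂ + b j₂, hle₁, hle₂, ?_⟩
      intro j hbj
      rcases le_total (a j + b j) (T : ℝ) with h | h
      · left
        exact injLow _ ⟨hmem j, h⟩ _ ⟨hmem j₁, hle₁⟩
          (by rw [keyg j hbj, keyg j₁ hbj₁])
      · right
        exact injHigh _ h _ hle₂ (by rw [keyg j hbj, keyg j₂ hbj₂])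
    · push_neg at h2
      refine ⟨a j₁ + b j₁, T, hle₁, le_refl _, ?_⟩
      intro j hbj
      left
      have h := (h2 j hbj).le
      exact injLow _ ⟨hmem j, h⟩ _ ⟨hmem j₁, hle₁⟩ (by rw [keyg j hbj, keyg j₁ hbj₁])
  · push_neg at h1
    by_cases h2 : ∃ j, 0 < b j ∧ (T : ℝ) ≤ a j + b j
    · obtain ⟨j₂, hbj₂, hle₂⟩ := h2
      refine ⟨T, a j₂ + b j₂, le_refl _, hle₂, ?_⟩
      intro j hbj
      right
      exact injHigh _ (h1 j hbj).le _ hle₂ (by rw [keyg j hbj, keyg j₂ hbj₂])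
    · refine ⟨T, T, le_refl _, le_refl _, ?_⟩
      intro j hbj
      exact absurd (⟨j, hbj, (h1 j hbj).le⟩ : ∃ j, 0 < b j ∧ (T:ℝ) ≤ a j + b j) h2
end

section
/- Let T ≥ 1 be an integer and C₁ ∈ (0,T). Suppose two indices j₁ ≠ j₂ with probabilities p_{j₁}, p_{j₂} > 0 satisfy a_{j₁}+b_{j₁} = a_{j₂}+b_{j₂} = C₁ with b_{j₂} > 0. Consider the perturbation b_{j₁} ↦ b_{j₁} + ε/p_{j₁}, b_{j₂} ↦ b_{j₂} - ε/p_{j₂} (which preserves Σ p_j b_j). The second derivative at ε = 0 of the objective Σ_j p_j e^{-(a_j+b_j)} Σ_{y<T}(a_j+b_j)^y/y! equals (1/p_{j₁} + 1/p_{j₂}) λ (C₁ - T)/C₁ where λ = e^{-C₁} C₁^T/T!, and this is strictly negative; hence such a configuration is not a local minimum. -/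
open Real

lemma hasDerivAt_S (T : ℕ) (x : ℝ) :
    HasDerivAt (fun x : ℝ => ∑ y ∈ Finset.range (T + 1), x ^ y / (Nat.factorial y))
      ((∑ y ∈ Finset.range (T + 1), x ^ y / (Nat.factorial y)) - x ^ T / (Nat.factorial T)) x := by
  have h : HasDerivAt (fun x : ℝ => ∑ y ∈ Finset.range (T + 1), x ^ y / (Nat.factorial y))
      (∑ y ∈ Finset.range (T + 1), (y : ℝ) * x ^ (y - 1) / (Nat.factorial y)) x := by
    apply HasDerivAt.fun_sum
    intro y _
    simpa [div_eq_mul_inv, mul_comm, mul_assoc, mul_left_comm] using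
      (hasDerivAt_pow y x).div_const (Nat.factorial y : ℝ)
  convert h using 1
  rw [Finset.sum_range_succ' (fun y => (y : ℝ) * x ^ (y - 1) / (Nat.factorial y)),
    Finset.sum_range_succ (fun y => x ^ y / (Nat.factorial y))]
  simp only [Nat.cast_zero, zero_mul, zero_div, add_zero, Nat.add_sub_cancel]
  rw [add_sub_cancel_right]
  apply Finset.sum_congr rfl
  intro y _
  rw [Nat.factorial_succ, Nat.cast_mul, Nat.cast_add, Nat.cast_one]
  field_simp

lemma hasDerivAt_f (T : ℕ) (x : ℝ) :
    HasDerivAt (fun x : ℝ => Real.exp (-x) * ∑ y ∈ Finset.range (T + 1), x ^ y / (Nat.factorial y))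
      (-(Real.exp (-x) * x ^ T / (Nat.factorial T))) x := by
  have he : HasDerivAt (fun x : ℝ => Real.exp (-x)) (-Real.exp (-x)) x := by
    simpa [Function.comp_def] using ((Real.hasDerivAt_exp (-x)).comp x (hasDerivAt_neg x))
  have := he.mul (hasDerivAt_S T x)
  refine this.congr_deriv ?_
  ring

lemma hasDerivAt_h (T : ℕ) (x : ℝ) :
    HasDerivAt (fun x : ℝ => Real.exp (-x) * x ^ T / (Nat.factorial T))
      ((-Real.exp (-x) * x ^ T + Real.exp (-x) * ((T : ℝ) * x ^ (T - 1))) / (Nat.factorial T)) x := by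
  have he : HasDerivAt (fun x : ℝ => Real.exp (-x)) (-Real.exp (-x)) x := by
    simpa [Function.comp_def] using ((Real.hasDerivAt_exp (-x)).comp x (hasDerivAt_neg x))
  exact (he.mul (hasDerivAt_pow T x)).div_const _

/-- Perturbing two coordinates that both sit at the lower level `C₁ < T`
(`b_{j₁} ↦ b_{j₁} + ε/p_{j₁}`, `b_{j₂} ↦ b_{j₂} - ε/p_{j₂}`, preserving `Σ p_j b_j`):
the second derivative of the objective at `ε = 0` is
`(1/p₁ + 1/p₂) λ (C₁ - T)/C₁ < 0` with `λ = e^{-C₁} C₁^T/T!`,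
so this configuration is not a local minimum. -/
theorem perturbation_second_derivative (T : ℕ) (hT : 1 ≤ T)
    (C₁ p₁ p₂ : ℝ) (hC₁ : 0 < C₁) (hC₁T : C₁ < (T : ℝ))
    (hp₁ : 0 < p₁) (hp₂ : 0 < p₂)
    (φ lam : ℝ → ℝ)
    (hφ : ∀ ε : ℝ,
      φ ε = p₁ * (Real.exp (-(C₁ + ε / p₁)) *
              ∑ y ∈ Finset.range (T + 1), (C₁ + ε / p₁) ^ y / (Nat.factorial y))
          + p₂ * (Real.exp (-(C₁ - ε / p₂)) *
              ∑ y ∈ Finset.range (T + 1), (C₁ - ε / p₂) ^ y / (Nat.factorial y))) :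
    deriv φ 0 = 0 ∧
    deriv (deriv φ) 0 =
      (1 / p₁ + 1 / p₂) * (Real.exp (-C₁) * C₁ ^ T / (Nat.factorial T)) *
        (C₁ - (T : ℝ)) / C₁ ∧
    deriv (deriv φ) 0 < 0 ∧
    ¬ IsLocalMin φ 0 := by
  have hp₁' : p₁ ≠ 0 := ne_of_gt hp₁
  have hp₂' : p₂ ≠ 0 := ne_of_gt hp₂
  set g : ℝ → ℝ := fun ε =>
    -(Real.exp (-(C₁ + ε / p₁)) * (C₁ + ε / p₁) ^ T / (Nat.factorial T))
    + Real.exp (-(C₁ - ε / p₂)) * (C₁ - ε / p₂) ^ T / (Nat.factorial T) with hg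
  -- first derivative
  have Hφ : ∀ ε : ℝ, HasDerivAt φ (g ε) ε := by
    intro ε
    have hφfun : φ = fun ε => p₁ * (Real.exp (-(C₁ + ε / p₁)) *
              ∑ y ∈ Finset.range (T + 1), (C₁ + ε / p₁) ^ y / (Nat.factorial y))
          + p₂ * (Real.exp (-(C₁ - ε / p₂)) *
              ∑ y ∈ Finset.range (T + 1), (C₁ - ε / p₂) ^ y / (Nat.factorial y)) :=
      funext hφ
    rw [hφfun]
    have h1 : HasDerivAt (fun ε : ℝ => C₁ + ε / p₁) (1 / p₁) ε := by
      simpa using ((hasDerivAt_id ε).div_const p₁).const_add C₁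
    have h2 : HasDerivAt (fun ε : ℝ => C₁ - ε / p₂) (-(1 / p₂)) ε := by
      simpa using ((hasDerivAt_id ε).div_const p₂).const_sub C₁
    have H1 := ((hasDerivAt_f T (C₁ + ε / p₁)).comp ε h1).const_mul p₁
    have H2 := ((hasDerivAt_f T (C₁ - ε / p₂)).comp ε h2).const_mul p₂
    have := H1.add H2
    refine this.congr_deriv ?_
    rw [hg]
    field_simp
  have hderiv : deriv φ = g := funext fun ε => (Hφ ε).deriv
  have hg0 : g 0 = 0 := by
    simp [hg]
  -- second derivative
  obtain ⟨T', rfl⟩ : ∃ T', T = T' + 1 := ⟨T - 1, (Nat.succ_pred_eq_of_pos hT).symm⟩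
  set D : ℝ := (1 / p₁ + 1 / p₂) *
      (Real.exp (-C₁) * C₁ ^ (T' + 1) / (Nat.factorial (T' + 1))) * (C₁ - ((T' + 1 : ℕ) : ℝ)) / C₁
    with hD
  have Hg : HasDerivAt g D 0 := by
    have h1 : HasDerivAt (fun ε : ℝ => C₁ + ε / p₁) (1 / p₁) 0 := by
      simpa using ((hasDerivAt_id (0 : ℝ)).div_const p₁).const_add C₁
    have h2 : HasDerivAt (fun ε : ℝ => C₁ - ε / p₂) (-(1 / p₂)) 0 := by
      simpa using ((hasDerivAt_id (0 : ℝ)).div_const p₂).const_sub C₁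
    have H1 := ((hasDerivAt_h (T' + 1) (C₁ + (0:ℝ) / p₁)).comp 0 h1).neg
    have H2 := (hasDerivAt_h (T' + 1) (C₁ - (0:ℝ) / p₂)).comp 0 h2
    have := H1.add H2
    refine this.congr_deriv ?_
    rw [hD]
    simp only [zero_div, add_zero, sub_zero, Nat.add_sub_cancel, Nat.cast_add, Nat.cast_one]
    field_simp
    ring
  have hD2 : deriv (deriv φ) 0 = D := by rw [hderiv]; exact Hg.deriv
  have hDneg : D < 0 := by
    rw [hD]
    apply div_neg_of_neg_of_pos _ hC₁
    apply mul_neg_of_pos_of_neg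
    · positivity
    · linarith
  refine ⟨by rw [hderiv]; exact hg0, hD2, by rw [hD2]; exact hDneg, ?_⟩
  -- not a local minimum
  intro hmin
  have hslope : Filter.Tendsto (slope g 0) (nhdsWithin 0 {(0:ℝ)}ᶜ) (nhds D) :=
    hasDerivAt_iff_tendsto_slope.mp Hg
  have hev : ∀ᶠ ε in nhdsWithin 0 {(0:ℝ)}ᶜ, slope g 0 ε < 0 :=
    hslope.eventually_lt_const hDneg
  have hev' : ∀ᶠ ε in nhdsWithin (0:ℝ) (Set.Ioi 0), g ε < 0 := by
    have hmono : nhdsWithin (0:ℝ) (Set.Ioi 0) ≤ nhdsWithin 0 {(0:ℝ)}ᶜ :=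
      nhdsWithin_mono 0 (fun x hx => ne_of_gt hx)
    filter_upwards [hev.filter_mono hmono, self_mem_nhdsWithin] with ε h1 h2
    have hε : (0:ℝ) < ε := h2
    have h3 : ε⁻¹ * g ε < 0 := by simpa [slope, hg0] using h1
    by_contra hge
    push_neg at hge
    exact absurd (mul_nonneg (inv_pos.mpr hε).le hge) (not_le.mpr h3)
  obtain ⟨u, hu, hsub⟩ := mem_nhdsGT_iff_exists_Ioo_subset.mp hev'
  have hu0 : (0:ℝ) < u := hu
  have hcont : ContinuousOn φ (Set.Icc 0 u) :=
    fun x _ => ((Hφ x).differentiableAt.continuousAt).continuousWithinAt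
  have hanti : StrictAntiOn φ (Set.Icc 0 u) := by
    apply strictAntiOn_of_deriv_neg (convex_Icc 0 u) hcont
    intro x hx
    rw [interior_Icc] at hx
    rw [hderiv]
    exact hsub hx
  have hminIoi : ∀ᶠ x in nhdsWithin (0:ℝ) (Set.Ioi 0), φ 0 ≤ φ x :=
    (hmin.filter_mono nhdsWithin_le_nhds)
  have hIoo : Set.Ioo (0:ℝ) u ∈ nhdsWithin (0:ℝ) (Set.Ioi 0) :=
    Ioo_mem_nhdsGT_of_mem ⟨le_refl 0, hu0⟩
  obtain ⟨x, hx1, hx2⟩ := (hminIoi.and (Filter.eventually_mem_set.mpr hIoo)).exists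
  have : φ x < φ 0 :=
    hanti ⟨le_refl 0, hu0.le⟩ ⟨hx2.1.le, hx2.2.le⟩ hx2.1
  linarith
end
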